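/- arXiv:0904.1479 — 3 statements merged into one kernel-verified Lean document; each statement's English description precedes it below -/
import Mathlib

section
/- λ(F_2) = 1/2, where F_2 = {(0,0,0),(1,1,0),(1,0,1),(0,1,1)} ⊆ V_3; that is, exc(n, F_2)/2^n → 1/2 as n → ∞. -/
open Finset Filter Topology

/-- The weight of a vertex of the hypercube `{0,1}^n`: number of coordinates equal to 1. -/
def cubeWeight {n : ℕ} (x : Fin n → Bool) : ℕ :=
  (Finset.univ.filter fun i => x i = true).card

/-- The support of a vertex of the hypercube: the set of coordinates equal to 1. -/
def cubeSupp {n : ℕ} (x : Fin n → Bool) : Finset (Fin n) :=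
  Finset.univ.filter fun i => x i = true

/-- An embedding of the `d`-dimensional hypercube `Q_d` into `Q_n`: an injective map on
vertices that preserves the edges (pairs at Hamming distance 1). -/
def IsCubeEmbedding {d n : ℕ} (i : (Fin d → Bool) → (Fin n → Bool)) : Prop :=
  Function.Injective i ∧
    ∀ x y : Fin d → Bool, hammingDist x y = 1 → hammingDist (i x) (i y) = 1

/-- `S ⊆ V_n` is `F`-free (for `F ⊆ V_d`) if no embedding `i : Q_d → Q_n` has `i(F) ⊆ S`. -/
def IsFree {d n : ℕ} (F : Set (Fin d → Bool)) (S : Set (Fin n → Bool)) : Prop :=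
  ∀ i : (Fin d → Bool) → (Fin n → Bool), IsCubeEmbedding i → ¬ (i '' F ⊆ S)

/-- `exc n F`: the maximum size of an `F`-free subset of `V_n = {0,1}^n`. -/
noncomputable def exc {d : ℕ} (n : ℕ) (F : Set (Fin d → Bool)) : ℕ :=
  sSup {k : ℕ | ∃ S : Finset (Fin n → Bool), IsFree F (S : Set (Fin n → Bool)) ∧ S.card = k}

/-- F₁ = {(0,0,0),(1,0,0),(0,1,0),(0,0,1)} ⊆ V₃. -/
def F1 : Set (Fin 3 → Bool) :=
  {![false, false, false], ![true, false, false], ![false, true, false], ![false, false, true]}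

/-- F₂ = {(0,0,0),(1,1,0),(1,0,1),(0,1,1)} ⊆ V₃. -/
def F2 : Set (Fin 3 → Bool) :=
  {![false, false, false], ![true, true, false], ![true, false, true], ![false, true, true]}

/-- F₃ = {(0,0,0),(1,1,1)} ⊆ V₃. -/
def F3 : Set (Fin 3 → Bool) :=
  {![false, false, false], ![true, true, true]}

/-!
Lower bound: flipping two coordinates that carry equal values changes the weight `w` by `±2`, hence
the parity of `C(w, 2)`. At the base vertex of a copy of `F2`, two of the three coordinates
spanning it carry equal values, so both parity classes of `C(w, 2)` are `F2`-free, and one of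
them has at least `2 ^ (n - 1)` elements.

Upper bound: `S` is `F2`-free iff for every `y ∈ S` the graph on coordinates joining `j, k`
whenever `y + e_j + e_k ∈ S` is triangle-free. Let `d x` be the number of neighbours of `x` in
`S`. Then `∑ d = n |S|`, while `∑ d² = ∑_{y ∈ S} (n + 2 e(link y)) ≤ |S| (n + n² / 2)` by
Mantel's theorem, and Cauchy–Schwarz gives `|S| ≤ (1 / 2 + 1 / n) 2 ^ n`.
-/

open scoped symmDiff

section Cube

variable {ι : Type*}

lemma hammingDist_symmDiff_left [Fintype ι] (y a b : ι → Bool) :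
    hammingDist (y ∆ a) (y ∆ b) = hammingDist a b :=
  hammingDist_comp (fun t => (y t ∆ ·)) fun _ => symmDiff_right_injective _

variable [DecidableEq ι]

def unitVec (j : ι) : ι → Bool := fun t => decide (t = j)

@[simp] lemma unitVec_apply (j t : ι) : unitVec j t = decide (t = j) := rfl

lemma unitVec_injective : Function.Injective (unitVec : ι → ι → Bool) := fun j k h => by
  simpa [unitVec] using congrFun h j

lemma symmDiff_unitVec_ne_self (x : ι → Bool) {j k : ι} (hjk : j ≠ k) :
    x ∆ unitVec j ∆ unitVec k ≠ x := by
  intro h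
  simpa [hjk, Bool.symmDiff_eq_xor] using congrFun h j

/-- Two vertices at distance two have exactly two common neighbours. -/
lemma eq_of_symmDiff_unitVec_eq {a x : ι → Bool} {p q s s' : ι} (hpq : p ≠ q) (hx : x ≠ a)
    (h₁ : x = a ∆ unitVec p ∆ unitVec s) (h₂ : x = a ∆ unitVec q ∆ unitVec s') :
    x = a ∆ unitVec p ∆ unitVec q := by
  have hsp : s ≠ p := by
    rintro rfl
    exact hx (by rw [h₁, symmDiff_symmDiff_cancel_right])
  have hs' : s' = p := by
    have h := congrFun (h₁.symm.trans h₂) p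
    simp only [Pi.symmDiff_apply, Bool.symmDiff_eq_xor, unitVec_apply, decide_true,
      decide_eq_false hsp.symm, decide_eq_false hpq, Bool.xor_false] at h
    revert h; cases a p <;> simp <;> exact fun h => h.symm
  rw [h₂, hs', symmDiff_right_comm]

variable [Fintype ι]

lemma exists_eq_symmDiff_unitVec_of_hammingDist_eq_one {x y : ι → Bool}
    (h : hammingDist x y = 1) : ∃ p, y = x ∆ unitVec p := by
  obtain ⟨p, hp⟩ := Finset.card_eq_one.1 h
  refine ⟨p, funext fun t => ?_⟩
  have ht := Finset.ext_iff.1 hp t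
  simp only [Finset.mem_filter, Finset.mem_univ, true_and, Finset.mem_singleton] at ht
  rw [Pi.symmDiff_apply, Bool.symmDiff_eq_xor, unitVec_apply]
  by_cases htp : t = p <;> cases hx : x t <;> cases hy : y t <;> simp_all

lemma hammingDist_symmDiff_unitVec (x : ι → Bool) (p : ι) :
    hammingDist x (x ∆ unitVec p) = 1 := by
  unfold hammingDist
  convert Finset.card_singleton p
  ext t
  by_cases h : t = p <;> simp [Bool.symmDiff_eq_xor, h]

end Cube

section Extend

variable {κ ι : Type*} {f : κ → ι}

lemma Function.Injective.extend_symmDiff (hf : f.Injective) (z w : κ → Bool) :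
    Function.extend f (z ∆ w) ⊥ = Function.extend f z ⊥ ∆ Function.extend f w ⊥ := by
  funext t
  by_cases h : ∃ s, f s = t
  · obtain ⟨s, rfl⟩ := h
    simp [hf.extend_apply]
  · simp [Function.extend_apply' _ _ _ h]

lemma Function.Injective.extend_unitVec [DecidableEq κ] [DecidableEq ι] (hf : f.Injective)
    (s : κ) :
    Function.extend f (unitVec s) ⊥ = unitVec (f s) := by
  funext t
  by_cases h : ∃ s', f s' = t
  · obtain ⟨s', rfl⟩ := h
    simp [hf.extend_apply, hf.eq_iff]
  · rw [Function.extend_apply' _ _ _ h, unitVec_apply, decide_eq_false fun ht => h ⟨s, ht.symm⟩]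
    rfl

lemma Function.Injective.hammingDist_extend [Fintype κ] [Fintype ι] (hf : f.Injective)
    (z w : κ → Bool) :
    hammingDist (Function.extend f z ⊥) (Function.extend f w ⊥) = hammingDist z w := by
  unfold hammingDist
  rw [← Finset.card_map ⟨f, hf⟩]
  congr 1
  ext t
  by_cases h : ∃ s, f s = t
  · obtain ⟨s, rfl⟩ := h
    simp [hf.extend_apply]
  · simp only [Finset.mem_filter, Finset.mem_univ, true_and, Finset.mem_map,
      Function.Embedding.coeFn_mk, Function.extend_apply' _ _ _ h, ne_eq, not_true_eq_false,
      false_iff, not_exists, not_and]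
    exact fun s _ hs => h ⟨s, hs⟩

end Extend

lemma isCubeEmbedding_of_hammingDist_eq {d n : ℕ} {i : (Fin d → Bool) → (Fin n → Bool)}
    (hi : ∀ z w, hammingDist (i z) (i w) = hammingDist z w) : IsCubeEmbedding i :=
  ⟨fun z w h => hammingDist_eq_zero.1 (hi z w ▸ hammingDist_eq_zero.2 h), fun z w h => hi z w ▸ h⟩

lemma isCubeEmbedding_subcube {d n : ℕ} (y : Fin n → Bool) {f : Fin d → Fin n}
    (hf : f.Injective) : IsCubeEmbedding fun z => y ∆ Function.extend f z ⊥ :=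
  isCubeEmbedding_of_hammingDist_eq fun z w => by
    rw [hammingDist_symmDiff_left, hf.hammingDist_extend]

lemma IsCubeEmbedding.map_symmDiff_unitVec {d n : ℕ} {i : (Fin d → Bool) → (Fin n → Bool)}
    (hi : IsCubeEmbedding i) (x : Fin d → Bool) {s s' : Fin d} (hss' : s ≠ s') {p q : Fin n}
    (hp : i (x ∆ unitVec s) = i x ∆ unitVec p) (hq : i (x ∆ unitVec s') = i x ∆ unitVec q) :
    i (x ∆ unitVec s ∆ unitVec s') = i x ∆ unitVec p ∆ unitVec q := by
  have hpq : p ≠ q := by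
    rintro rfl
    exact hss' (unitVec_injective (symmDiff_right_injective x (hi.1 (hp.trans hq.symm))))
  have hne : i (x ∆ unitVec s ∆ unitVec s') ≠ i x := hi.1.ne (symmDiff_unitVec_ne_self x hss')
  obtain ⟨t, ht⟩ := exists_eq_symmDiff_unitVec_of_hammingDist_eq_one
    (hp ▸ hi.2 _ _ (hammingDist_symmDiff_unitVec _ s'))
  obtain ⟨t', ht'⟩ := exists_eq_symmDiff_unitVec_of_hammingDist_eq_one
    (hq ▸ symmDiff_right_comm x (unitVec s) (unitVec s') ▸
      hi.2 _ _ (hammingDist_symmDiff_unitVec _ s))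
  exact eq_of_symmDiff_unitVec_eq hpq hne ht ht'

lemma F2_eq : F2 = {⊥, unitVec 0 ∆ unitVec 1, unitVec 0 ∆ unitVec 2, unitVec 1 ∆ unitVec 2} := by
  unfold F2
  congr <;> decide

lemma image_F2_subset_iff {n : ℕ} (i : (Fin 3 → Bool) → (Fin n → Bool))
    (S : Set (Fin n → Bool)) :
    i '' F2 ⊆ S ↔ i ⊥ ∈ S ∧ i (unitVec 0 ∆ unitVec 1) ∈ S ∧ i (unitVec 0 ∆ unitVec 2) ∈ S ∧
      i (unitVec 1 ∆ unitVec 2) ∈ S := by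
  simp [F2_eq, Set.insert_subset_iff]

def linkGraph {ι : Type*} [DecidableEq ι] (S : Finset (ι → Bool)) (y : ι → Bool) :
    SimpleGraph ι where
  Adj j k := j ≠ k ∧ y ∆ unitVec j ∆ unitVec k ∈ S
  symm := ⟨fun j k h => ⟨h.1.symm, symmDiff_right_comm y (unitVec j) (unitVec k) ▸ h.2⟩⟩
  loopless := ⟨fun _ h => h.1 rfl⟩

@[simp] lemma linkGraph_adj {ι : Type*} [DecidableEq ι] {S : Finset (ι → Bool)} {y : ι → Bool}
    {j k : ι} : (linkGraph S y).Adj j k ↔ j ≠ k ∧ y ∆ unitVec j ∆ unitVec k ∈ S :=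
  Iff.rfl

instance {ι : Type*} [Fintype ι] [DecidableEq ι] (S : Finset (ι → Bool)) (y : ι → Bool) :
    DecidableRel (linkGraph S y).Adj :=
  fun j k => inferInstanceAs (Decidable (j ≠ k ∧ _))

theorem isFree_F2_iff {n : ℕ} (S : Finset (Fin n → Bool)) :
    IsFree F2 (S : Set (Fin n → Bool)) ↔ ∀ y ∈ S, (linkGraph S y).CliqueFree 3 := by
  constructor
  · intro hS y hy s hs
    obtain ⟨a, b, c, ⟨hab, hab'⟩, ⟨hac, hac'⟩, ⟨hbc, hbc'⟩, rfl⟩ := SimpleGraph.is3Clique_iff.1 hs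
    have hf : Function.Injective ![a, b, c] := by
      intro u v huv
      fin_cases u <;> fin_cases v <;> simp_all [hab.symm, hac.symm, hbc.symm]
    refine hS _ (isCubeEmbedding_subcube y hf) ((image_F2_subset_iff _ _).2 ⟨?_, ?_, ?_, ?_⟩)
    · have hbot : Function.extend ![a, b, c] (⊥ : Fin 3 → Bool) (⊥ : Fin n → Bool) = ⊥ :=
        Function.extend_const _ _
      simpa [hbot] using hy
    · simpa [hf.extend_symmDiff, hf.extend_unitVec, ← symmDiff_assoc] using hab'
    · simpa [hf.extend_symmDiff, hf.extend_unitVec, ← symmDiff_assoc] using hac'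
    · simpa [hf.extend_symmDiff, hf.extend_unitVec, ← symmDiff_assoc] using hbc'
  · intro hS i hi hsub
    obtain ⟨h0, h01, h02, h12⟩ := (image_F2_subset_iff i _).1 hsub
    have hunit : ∀ s, ∃ p, i (⊥ ∆ unitVec s) = i ⊥ ∆ unitVec p := fun s =>
      exists_eq_symmDiff_unitVec_of_hammingDist_eq_one
        (hi.2 _ _ (hammingDist_symmDiff_unitVec _ s))
    choose p hp using hunit
    have hpinj : p.Injective := fun s s' h =>
      unitVec_injective (symmDiff_right_injective ⊥ (hi.1 (by rw [hp, hp, h])))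
    have hsq : ∀ s s', s ≠ s' →
        i (unitVec s ∆ unitVec s') = i ⊥ ∆ unitVec (p s) ∆ unitVec (p s') :=
      fun s s' h => by simpa using hi.map_symmDiff_unitVec ⊥ h (hp s) (hp s')
    have hadj : ∀ s s', s ≠ s' → i (unitVec s ∆ unitVec s') ∈ S →
        (linkGraph S (i ⊥)).Adj (p s) (p s') :=
      fun s s' h hs => ⟨hpinj.ne h, hsq s s' h ▸ hs⟩
    exact hS _ h0 {p 0, p 1, p 2} (SimpleGraph.is3Clique_triple_iff.2
      ⟨hadj 0 1 (by decide) h01, hadj 0 2 (by decide) h02, hadj 1 2 (by decide) h12⟩)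

lemma isFree_F2_filter_of_flip {n : ℕ} {φ : (Fin n → Bool) → Prop} [DecidablePred φ]
    (hφ : ∀ y p q, p ≠ q → y p = y q → ¬(φ (y ∆ unitVec p ∆ unitVec q) ↔ φ y)) :
    IsFree F2 ((univ.filter φ : Finset (Fin n → Bool)) : Set (Fin n → Bool)) := by
  refine (isFree_F2_iff _).2 fun y hy s hs => ?_
  obtain ⟨a, b, c, ⟨hab, hab'⟩, ⟨hac, hac'⟩, ⟨hbc, hbc'⟩, rfl⟩ := SimpleGraph.is3Clique_iff.1 hs
  simp only [mem_filter, mem_univ, true_and] at hy hab' hac' hbc'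
  have hne : ∀ {u v}, u ≠ v → φ (y ∆ unitVec u ∆ unitVec v) → y u ≠ y v :=
    fun huv h hyuv => hφ y _ _ huv hyuv (iff_of_true h hy)
  have hyab := hne hab hab'
  have hyac := hne hac hac'
  have hybc := hne hbc hbc'
  revert hyab hyac hybc
  cases y a <;> cases y b <;> cases y c <;> simp

lemma cubeWeight_symmDiff_unitVec_of_eq_false {n : ℕ} {y : Fin n → Bool} {p q : Fin n}
    (hpq : p ≠ q) (hp : y p = false) (hq : y q = false) :
    cubeWeight (y ∆ unitVec p ∆ unitVec q) = cubeWeight y + 2 := by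
  unfold cubeWeight
  rw [show (univ.filter fun t => (y ∆ unitVec p ∆ unitVec q) t = true)
      = insert p (insert q (univ.filter fun t => y t = true)) by
    ext t
    by_cases htp : t = p <;> by_cases htq : t = q <;>
      simp_all [Bool.symmDiff_eq_xor],
    card_insert_of_notMem (by simp [hp, hpq]), card_insert_of_notMem (by simp [hq])]

lemma even_choose_two_add_two_iff (w : ℕ) : Even ((w + 2).choose 2) ↔ ¬Even (w.choose 2) := by
  rw [show (w + 2).choose 2 = w.choose 2 + (2 * w + 1) by simp [Nat.choose_succ_succ']; ring]
  simp [Nat.even_add]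

lemma even_choose_two_cubeWeight_symmDiff_iff {n : ℕ} {y : Fin n → Bool} {p q : Fin n}
    (hpq : p ≠ q) (h : y p = y q) :
    ¬(Even ((cubeWeight (y ∆ unitVec p ∆ unitVec q)).choose 2) ↔
      Even ((cubeWeight y).choose 2)) := by
  cases hp : y p
  · rw [cubeWeight_symmDiff_unitVec_of_eq_false hpq hp (h ▸ hp), even_choose_two_add_two_iff]
    exact not_iff_self
  · set y' := y ∆ unitVec p ∆ unitVec q
    have hy : y = y' ∆ unitVec p ∆ unitVec q := by
      rw [symmDiff_right_comm y', symmDiff_symmDiff_cancel_right, symmDiff_symmDiff_cancel_right]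
    have hwt : cubeWeight y = cubeWeight y' + 2 := by
      rw [hy]
      exact cubeWeight_symmDiff_unitVec_of_eq_false hpq (by simp [y', hp, hpq])
        (by simp [y', ← h, hp, hpq.symm, Bool.symmDiff_eq_xor])
    rw [hwt, even_choose_two_add_two_iff]
    exact fun h => not_iff_self h.symm

lemma bddAbove_card_isFree {d : ℕ} (n : ℕ) (F : Set (Fin d → Bool)) :
    BddAbove {k | ∃ S : Finset (Fin n → Bool), IsFree F (S : Set (Fin n → Bool)) ∧ #S = k} :=
  ⟨2 ^ n, by rintro k ⟨S, -, rfl⟩; simpa using S.card_le_univ⟩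

lemma card_le_exc {d n : ℕ} {F : Set (Fin d → Bool)} {S : Finset (Fin n → Bool)}
    (hS : IsFree F (S : Set (Fin n → Bool))) : #S ≤ exc n F :=
  le_csSup (bddAbove_card_isFree n F) ⟨S, hS, rfl⟩

lemma exists_isFree_card_eq_exc {d : ℕ} (n : ℕ) {F : Set (Fin d → Bool)} (hF : F.Nonempty) :
    ∃ S : Finset (Fin n → Bool), IsFree F (S : Set (Fin n → Bool)) ∧ #S = exc n F := by
  refine Nat.sSup_mem ?_ (bddAbove_card_isFree n F)
  exact ⟨0, ∅, fun _ _ h => by simpa using h (Set.mem_image_of_mem _ hF.some_mem), rfl⟩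

theorem two_pow_le_two_mul_exc_F2 (n : ℕ) : 2 ^ n ≤ 2 * exc n F2 := by
  let φ : (Fin n → Bool) → Prop := fun x => Even ((cubeWeight x).choose 2)
  have hflip : ∀ y p q, p ≠ q → y p = y q → ¬(φ (y ∆ unitVec p ∆ unitVec q) ↔ φ y) :=
    fun _ _ _ => even_choose_two_cubeWeight_symmDiff_iff
  have heven := card_le_exc (isFree_F2_filter_of_flip hflip)
  have hodd := card_le_exc (isFree_F2_filter_of_flip (φ := fun x => ¬φ x) fun y p q hpq h =>
    not_iff_not.not.2 (hflip y p q hpq h))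
  have hsum := card_filter_add_card_filter_not (s := (univ : Finset (Fin n → Bool))) φ
  simp only [card_univ, Fintype.card_fun, Fintype.card_bool, Fintype.card_fin] at hsum
  omega

lemma SimpleGraph.CliqueFree.four_mul_card_edgeFinset_le {V : Type*} [Fintype V]
    {G : SimpleGraph V} [DecidableRel G.Adj] (h : G.CliqueFree 3) :
    4 * #G.edgeFinset ≤ Fintype.card V ^ 2 := by
  have hle := SimpleGraph.CliqueFree.card_edgeFinset_le (r := 2) h
  have hmod : (Fintype.card V % 2).choose 2 = 0 := Nat.choose_eq_zero_of_lt (by omega)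
  simp only [hmod, add_zero, Nat.add_one_sub_one, mul_one] at hle
  omega

section Counting

variable {ι : Type*} [Fintype ι] [DecidableEq ι] (S : Finset (ι → Bool))

def neighborCount (x : ι → Bool) : ℕ := #{j | x ∆ unitVec j ∈ S}

lemma sum_symmDiff_right {M : Type*} [AddCommMonoid M] (u : ι → Bool) (g : (ι → Bool) → M) :
    ∑ x, g (x ∆ u) = ∑ x, g x :=
  Equiv.sum_comp (symmDiff_left_involutive u).toPerm g

lemma sum_neighborCount : ∑ x, neighborCount S x = Fintype.card ι * #S := by
  calc ∑ x, neighborCount S x = ∑ j, ∑ x, if x ∆ unitVec j ∈ S then 1 else 0 := by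
        simp only [neighborCount, card_filter]
        exact sum_comm
    _ = ∑ _j : ι, #S := sum_congr rfl fun j _ =>
        (sum_symmDiff_right (unitVec j) fun x => if x ∈ S then 1 else 0).trans (by simp)
    _ = Fintype.card ι * #S := by simp

lemma sum_neighborCount_sq :
    ∑ x, neighborCount S x ^ 2 = ∑ y ∈ S, ∑ j, #{k | y ∆ unitVec j ∆ unitVec k ∈ S} := by
  have hpair : ∀ j k, ∑ x : ι → Bool,
      (if x ∆ unitVec j ∈ S then 1 else 0) * (if x ∆ unitVec k ∈ S then 1 else 0)
        = ∑ y ∈ S, if y ∆ unitVec j ∆ unitVec k ∈ S then 1 else 0 := fun j k => by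
    rw [← sum_symmDiff_right (unitVec j)]
    simp [← sum_filter, inter_comm, inter_filter]
  calc ∑ x, neighborCount S x ^ 2
      = ∑ x, ∑ j, ∑ k, (if x ∆ unitVec j ∈ S then 1 else 0) *
          (if x ∆ unitVec k ∈ S then 1 else 0) := by
        simp only [neighborCount, card_filter, sq, sum_mul_sum]
    _ = ∑ j, ∑ k, ∑ y ∈ S, if y ∆ unitVec j ∆ unitVec k ∈ S then (1 : ℕ) else 0 := by
        rw [sum_comm]
        exact sum_congr rfl fun j _ => sum_comm.trans (sum_congr rfl fun k _ => hpair j k)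
    _ = ∑ y ∈ S, ∑ j, #{k | y ∆ unitVec j ∆ unitVec k ∈ S} := by
        simp only [card_filter]
        rw [sum_comm (s := S)]
        exact sum_congr rfl fun j _ => sum_comm

lemma card_symmDiff_mem_eq_degree_add_one {y : ι → Bool} (hy : y ∈ S) (j : ι) :
    #{k | y ∆ unitVec j ∆ unitVec k ∈ S} = (linkGraph S y).degree j + 1 := by
  rw [← SimpleGraph.card_neighborFinset_eq_degree,
    ← card_insert_of_notMem (s := (linkGraph S y).neighborFinset j) (a := j) (by simp)]
  congr 1
  ext k
  by_cases hk : k = j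
  · simp [hk, hy]
  · simp [hk, Ne.symm hk]

lemma two_mul_sum_card_symmDiff_mem_le {y : ι → Bool} (hy : y ∈ S)
    (hfree : (linkGraph S y).CliqueFree 3) :
    2 * ∑ j, #{k | y ∆ unitVec j ∆ unitVec k ∈ S} ≤ Fintype.card ι ^ 2 + 2 * Fintype.card ι := by
  simp only [card_symmDiff_mem_eq_degree_add_one S hy, sum_add_distrib,
    SimpleGraph.sum_degrees_eq_twice_card_edges, sum_const, card_univ, smul_eq_mul, mul_one]
  have := hfree.four_mul_card_edgeFinset_le
  omega

end Counting

theorem card_le_of_isFree_F2 {n : ℕ} {S : Finset (Fin n → Bool)}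
    (hS : IsFree F2 (S : Set (Fin n → Bool))) : 2 * n * #S ≤ (n + 2) * 2 ^ n := by
  have hlink := (isFree_F2_iff S).1 hS
  have hsq : 2 * ∑ x, neighborCount S x ^ 2 ≤ #S * (n ^ 2 + 2 * n) := by
    rw [sum_neighborCount_sq, mul_sum]
    calc ∑ y ∈ S, 2 * ∑ j, #{k | y ∆ unitVec j ∆ unitVec k ∈ S}
        ≤ ∑ _y ∈ S, (n ^ 2 + 2 * n) := sum_le_sum fun y hy => by
          simpa using two_mul_sum_card_symmDiff_mem_le S hy (hlink y hy)
      _ = #S * (n ^ 2 + 2 * n) := by rw [sum_const, smul_eq_mul]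
  have hcs : (n * #S) ^ 2 ≤ 2 ^ n * ∑ x, neighborCount S x ^ 2 := by
    simpa [sum_neighborCount] using sq_sum_le_card_mul_sum_sq (s := univ) (f := neighborCount S)
  rcases Nat.eq_zero_or_pos (n * #S) with h | h
  · simp [mul_assoc, h]
  · refine Nat.le_of_mul_le_mul_left ?_ h
    calc n * #S * (2 * n * #S) = 2 * (n * #S) ^ 2 := by ring
      _ ≤ 2 ^ n * (2 * ∑ x, neighborCount S x ^ 2) := by linarith
      _ ≤ 2 ^ n * (#S * (n ^ 2 + 2 * n)) := Nat.mul_le_mul_left _ hsq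
      _ = n * #S * ((n + 2) * 2 ^ n) := by ring

theorem two_mul_mul_exc_F2_le (n : ℕ) : 2 * n * exc n F2 ≤ (n + 2) * 2 ^ n := by
  obtain ⟨S, hS, hcard⟩ := exists_isFree_card_eq_exc n (F := F2) ⟨_, Set.mem_insert _ _⟩
  exact hcard ▸ card_le_of_isFree_F2 hS

/-- λ(F₂) = 1/2. -/
theorem lambda_F2 :
    Filter.Tendsto (fun n : ℕ => (exc n F2 : ℝ) / 2 ^ n) Filter.atTop (𝓝 (1 / 2)) := by
  have hlower : ∀ n : ℕ, 1 / 2 ≤ (exc n F2 : ℝ) / 2 ^ n := fun n => by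
    have : (2 : ℝ) ^ n ≤ 2 * exc n F2 := by exact_mod_cast two_pow_le_two_mul_exc_F2 n
    rw [le_div_iff₀ (by positivity)]
    linarith
  have hupper : ∀ n ≥ 1, (exc n F2 : ℝ) / 2 ^ n ≤ 1 / 2 + 1 / n := fun n hn => by
    have : 2 * n * (exc n F2 : ℝ) ≤ (n + 2) * 2 ^ n := by exact_mod_cast two_mul_mul_exc_F2_le n
    have hn : (0 : ℝ) < n := by exact_mod_cast hn
    rw [div_le_iff₀ (by positivity), div_add_div _ _ two_ne_zero hn.ne', div_mul_eq_mul_div,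
      le_div_iff₀ (by positivity)]
    linarith
  refine tendsto_of_tendsto_of_tendsto_of_le_of_le' tendsto_const_nhds ?_
    (Eventually.of_forall hlower) (eventually_atTop.2 ⟨1, hupper⟩)
  simpa using (tendsto_const_nhds (x := (1 / 2 : ℝ))).add tendsto_one_div_atTop_nhds_zero_nat
end

section
/- λ({F_1, F_3}) = 1/2; that is, exc(n, {F_1,F_3})/2^n → 1/2 as n → ∞, where exc(n, {F_1,F_3}) is the maximum size of a subset of V_n that is simultaneously F_1-free and F_3-free. -/
open Finset Filter Topology

/-- The maximum size of a subset of V_n that is simultaneously F-free and G-free. -/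
noncomputable def exc2 {d : ℕ} (n : ℕ) (F G : Set (Fin d → Bool)) : ℕ :=
  sSup {k : ℕ | ∃ S : Finset (Fin n → Bool),
    IsFree F (S : Set (Fin n → Bool)) ∧ IsFree G (S : Set (Fin n → Bool)) ∧ S.card = k}

/-!
The set of even-weight vertices has size `2^(n-1)`. It is `F₁`-free and `F₃`-free because an
edge-preserving map of hypercubes preserves the parity of distances, while `F₁` and `F₃` both
contain two points at odd distance. Conversely, for `n ≥ 3` flipping the first three coordinates
is a fixed-point-free involution `τ` of `V_n`, and `x, τ x` is the image of the antipodal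
pair `F₃` under an embedding of `Q_3`; so an `F₃`-free set meets each of the `2^(n-1)` orbits
of `τ` at most once.
-/

section Hamming

variable {ι : Type*} [Fintype ι] [DecidableEq ι] {β : ι → Type*} [∀ i, DecidableEq (β i)]

theorem hammingDist_update_self {x : ∀ i, β i} {j : ι} {b : β j} (h : x j ≠ b) :
    hammingDist x (Function.update x j b) = 1 := by
  rw [hammingDist, Finset.card_eq_one]
  refine ⟨j, Finset.ext fun k => ?_⟩
  by_cases hk : k = j
  · subst hk; simpa using h
  · simp [hk]

theorem hammingDist_update_add_one {x y : ∀ i, β i} {j : ι} (h : x j ≠ y j) :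
    hammingDist (Function.update x j (y j)) y + 1 = hammingDist x y := by
  have hfilter : ({k | Function.update x j (y j) k ≠ y k} : Finset ι) =
      ({k | x k ≠ y k} : Finset ι).erase j := by
    ext k
    by_cases hk : k = j
    · subst hk; simp
    · simp [hk]
  rw [hammingDist, hammingDist, hfilter, Finset.card_erase_add_one (by simpa using h)]

end Hamming

theorem two_mul_card_le_of_involutive {α : Type*} [Fintype α] [DecidableEq α] {τ : α → α}
    (hτ : Function.Involutive τ) {S : Finset α} (hS : ∀ x ∈ S, τ x ∉ S) :
    2 * #S ≤ Fintype.card α := by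
  have hdisj : Disjoint S (S.image τ) := by
    rw [Finset.disjoint_right]
    intro y hy hyS
    obtain ⟨x, hx, rfl⟩ := Finset.mem_image.mp hy
    exact hS x hx hyS
  calc 2 * #S = #(S ∪ S.image τ) := by
        rw [Finset.card_union_of_disjoint hdisj, Finset.card_image_of_injective _ hτ.injective]
        ring
    _ ≤ Fintype.card α := Finset.card_le_univ _

theorem two_mul_card_eq_of_involutive {α : Type*} [Fintype α] [DecidableEq α] {τ : α → α}
    (hτ : Function.Involutive τ) {S : Finset α} (hS : ∀ x, τ x ∈ S ↔ x ∉ S) :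
    2 * #S = Fintype.card α := by
  have himage : S.image τ = Sᶜ := by
    ext y
    rw [Finset.mem_compl, ← hS, Finset.mem_image]
    exact ⟨fun ⟨x, hx, hxy⟩ => hxy ▸ (hτ x).symm ▸ hx, fun hy => ⟨τ y, hy, hτ y⟩⟩
  rw [two_mul, ← Finset.card_compl_add_card S, ← himage,
    Finset.card_image_of_injective _ hτ.injective]

def prefixXor {d n : ℕ} (x : Fin n → Bool) (z : Fin d → Bool) : Fin n → Bool :=
  fun j => if h : (j : ℕ) < d then xor (z ⟨j, h⟩) (x j) else x j

theorem hammingDist_prefixXor {d n : ℕ} (hdn : d ≤ n) (x : Fin n → Bool)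
    (z z' : Fin d → Bool) :
    hammingDist (prefixXor x z) (prefixXor x z') = hammingDist z z' := by
  have hfilter : ({j | prefixXor x z j ≠ prefixXor x z' j} : Finset (Fin n)) =
      ({k | z k ≠ z' k} : Finset (Fin d)).map (Fin.castLEEmb hdn) := by
    ext j
    simp only [Finset.mem_filter, Finset.mem_univ, true_and, Finset.mem_map, Fin.castLEEmb_apply]
    by_cases h : (j : ℕ) < d
    · constructor
      · intro hj
        refine ⟨⟨j, h⟩, fun hz => hj ?_, rfl⟩
        simp [prefixXor, h, hz]
      · rintro ⟨k, hk, rfl⟩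
        simpa [prefixXor] using hk
    · simp only [prefixXor, h, dite_false, ne_eq, not_true_eq_false, false_iff, not_exists,
        not_and]
      exact fun k _ hkj => h (hkj ▸ k.isLt)
  rw [hammingDist, hammingDist, hfilter, Finset.card_map]

theorem prefixXor_false {d n : ℕ} (x : Fin n → Bool) :
    prefixXor x (fun _ : Fin d => false) = x := by
  funext j
  simp [prefixXor]

theorem prefixXor_prefixXor {d n : ℕ} (x : Fin n → Bool) (z : Fin d → Bool) :
    prefixXor (prefixXor x z) z = x := by
  funext j
  by_cases h : (j : ℕ) < d <;> simp [prefixXor, h]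

theorem isCubeEmbedding_prefixXor {d n : ℕ} (hdn : d ≤ n) (x : Fin n → Bool) :
    IsCubeEmbedding (prefixXor x : (Fin d → Bool) → Fin n → Bool) :=
  ⟨fun z z' h => hammingDist_eq_zero.mp <| by
      rw [← hammingDist_prefixXor hdn x, h, hammingDist_self],
    fun z z' h => by rw [hammingDist_prefixXor hdn, h]⟩

theorem two_mul_card_le_of_isFree_antipodal {d n : ℕ} (hdn : d ≤ n)
    {S : Finset (Fin n → Bool)}
    (hS : IsFree {fun _ : Fin d => false, fun _ => true} (S : Set (Fin n → Bool))) :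
    2 * #S ≤ 2 ^ n := by
  refine (two_mul_card_le_of_involutive (τ := fun x => prefixXor x fun _ : Fin d => true)
    (prefixXor_prefixXor · _) fun x hx hτx => ?_).trans_eq (by simp)
  refine hS _ (isCubeEmbedding_prefixXor hdn x) ?_
  rw [Set.image_pair, prefixXor_false]
  exact Set.insert_subset hx (Set.singleton_subset_iff.mpr hτx)

theorem F3_eq : F3 = {fun _ => false, fun _ => true} := by
  rw [F3, show (![false, false, false] : Fin 3 → Bool) = fun _ => false by decide,
    show (![true, true, true] : Fin 3 → Bool) = fun _ => true by decide]

theorem cast_hammingDist_eq_add {n : ℕ} (x y : Fin n → Bool) :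
    (hammingDist x y : ZMod 2) = cubeWeight x + cubeWeight y := by
  simp only [hammingDist, cubeWeight, Finset.card_filter, Nat.cast_sum, ← Finset.sum_add_distrib]
  refine Finset.sum_congr rfl fun i _ => ?_
  cases x i <;> cases y i <;> decide

theorem cast_hammingDist_add {n : ℕ} (x y z : Fin n → Bool) :
    (hammingDist x z : ZMod 2) = hammingDist x y + hammingDist y z := by
  simp only [cast_hammingDist_eq_add]
  generalize (cubeWeight x : ZMod 2) = a, (cubeWeight y : ZMod 2) = b, (cubeWeight z : ZMod 2) = c
  revert a b c
  decide

/-- Along a shortest path from `x` to `y`, each step flips the parity of the weight both of the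
point and of its image. -/
theorem cast_hammingDist_map {d n : ℕ} {i : (Fin d → Bool) → Fin n → Bool}
    (hi : ∀ x y, hammingDist x y = 1 → hammingDist (i x) (i y) = 1) (x y : Fin d → Bool) :
    (hammingDist (i x) (i y) : ZMod 2) = hammingDist x y := by
  induction hxy : hammingDist x y generalizing x with
  | zero => rw [hammingDist_eq_zero.mp hxy, hammingDist_self, Nat.cast_zero]
  | succ k ih =>
    have hne : x ≠ y := by rw [← hammingDist_ne_zero, hxy]; omega
    obtain ⟨j, hj⟩ := Function.ne_iff.mp hne
    have hstep := hammingDist_update_self hj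
    have hrest := ih (Function.update x j (y j)) (by have := hammingDist_update_add_one hj; omega)
    rw [cast_hammingDist_add _ (i (Function.update x j (y j))), hi _ _ hstep, hrest]
    push_cast
    ring

def evenWeight (n : ℕ) : Finset (Fin n → Bool) :=
  {x | (cubeWeight x : ZMod 2) = 0}

theorem isFree_evenWeight {d n : ℕ} {F : Set (Fin d → Bool)} {a b : Fin d → Bool}
    (ha : a ∈ F) (hb : b ∈ F) (hab : (hammingDist a b : ZMod 2) = 1) :
    IsFree F (evenWeight n : Set (Fin n → Bool)) := by
  intro i hi hF
  have hia : (cubeWeight (i a) : ZMod 2) = 0 := by simpa [evenWeight] using hF ⟨a, ha, rfl⟩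
  have hib : (cubeWeight (i b) : ZMod 2) = 0 := by simpa [evenWeight] using hF ⟨b, hb, rfl⟩
  have := cast_hammingDist_map hi.2 a b
  rw [cast_hammingDist_eq_add, hia, hib, hab] at this
  exact zero_ne_one (this.trans (by simp))

theorem two_mul_card_evenWeight {n : ℕ} (hn : 1 ≤ n) : 2 * #(evenWeight n) = 2 ^ n := by
  let τ : (Fin n → Bool) → Fin n → Bool := fun x => prefixXor x fun _ : Fin 1 => true
  have hodd (x : Fin n → Bool) : (hammingDist x (τ x) : ZMod 2) = 1 := by
    calc (hammingDist x (τ x) : ZMod 2)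
        = hammingDist (prefixXor x fun _ : Fin 1 => false) (τ x) := by rw [prefixXor_false]
      _ = 1 := by rw [hammingDist_prefixXor hn]; decide
  refine (two_mul_card_eq_of_involutive (τ := τ) (prefixXor_prefixXor · _) fun x => ?_).trans
    (by simp)
  have := hodd x
  rw [cast_hammingDist_eq_add] at this
  simp only [evenWeight, Finset.mem_filter, Finset.mem_univ, true_and]
  generalize (cubeWeight x : ZMod 2) = a, (cubeWeight (τ x) : ZMod 2) = b at this ⊢
  revert a b
  decide

theorem two_mul_exc2_F1_F3 {n : ℕ} (hn : 3 ≤ n) : 2 * exc2 n F1 F3 = 2 ^ n := by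
  have hF1 : IsFree F1 (evenWeight n : Set (Fin n → Bool)) :=
    isFree_evenWeight (a := ![false, false, false]) (b := ![true, false, false]) (by simp [F1])
      (by simp [F1]) (by decide)
  have hF3 : IsFree F3 (evenWeight n : Set (Fin n → Bool)) :=
    isFree_evenWeight (a := ![false, false, false]) (b := ![true, true, true]) (by simp [F3])
      (by simp [F3]) (by decide)
  have hgreatest : IsGreatest {k | ∃ S : Finset (Fin n → Bool),
      IsFree F1 (S : Set (Fin n → Bool)) ∧ IsFree F3 (S : Set (Fin n → Bool)) ∧ #S = k}
      #(evenWeight n) := by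
    refine ⟨⟨_, hF1, hF3, rfl⟩, ?_⟩
    rintro _ ⟨S, -, hS, rfl⟩
    have := two_mul_card_le_of_isFree_antipodal hn (F3_eq ▸ hS)
    have := two_mul_card_evenWeight (n := n) (by omega)
    omega
  rw [exc2, hgreatest.csSup_eq, two_mul_card_evenWeight (by omega)]

/-- λ({F₁, F₃}) = 1/2. -/
theorem lambda_F1F3 :
    Filter.Tendsto (fun n : ℕ => (exc2 n F1 F3 : ℝ) / 2 ^ n) Filter.atTop (𝓝 (1 / 2)) := by
  refine tendsto_const_nhds.congr' ?_
  filter_upwards [eventually_ge_atTop 3] with n hn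
  have h : (2 : ℝ) * exc2 n F1 F3 = 2 ^ n := by exact_mod_cast two_mul_exc2_F1_F3 hn
  field_simp
  linarith
end

section
/- For every integer l ≥ 1 there exists a constant C = C(l) such that for all n ≥ 1 and all S ⊆ V_n: |Σ_{v ∈ S} h_l(v)^2 − Σ_{x ∈ S} Σ_{z ∈ S ∩ Γ_{2l}(x)} h_l(x,z)| ≤ C·n^{2l−1}·2^n. -/
open Finset Filter Topology

/-- h_l(x) = |S ∩ Γ_l(x)|: the number of elements of S at Hamming distance exactly l from x. -/
def hcount {n : ℕ} (S : Finset (Fin n → Bool)) (l : ℕ) (x : Fin n → Bool) : ℕ :=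
  (S.filter fun y => hammingDist x y = l).card

/-- h_l(x,z) = |S ∩ Γ_l(x) ∩ Γ_l(z)|: the number of elements of S at Hamming distance
exactly l from both x and z. -/
def hcount2 {n : ℕ} (S : Finset (Fin n → Bool)) (l : ℕ) (x z : Fin n → Bool) : ℕ :=
  (S.filter fun y => hammingDist x y = l ∧ hammingDist z y = l).card

/-! Expanding the square, `∑ v ∈ S, h_l(v)²` counts the triples `(x, v, z) ∈ S³` with
`d(x, v) = d(v, z) = l`, i.e. it equals `∑ x ∈ S, ∑ z ∈ S, h_l(x, z)`. The terms with
`d(x, z) ≠ 2l` are the error: for them the coordinate sets on which `x, v` and `v, z` differ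
meet, so given `x` and `v` there are at most `l · n^(l-1)` choices of `z`, and given `x` at most
`n^l` choices of `v`. Summing over `x ∈ S` bounds the error by `l · n^(2l-1) · 2^n`. -/

section
variable {ι : Type*} [Fintype ι]

def diffSet (x y : ι → Bool) : Finset ι := {i | x i ≠ y i}

theorem card_diffSet (x y : ι → Bool) : #(diffSet x y) = hammingDist x y := rfl

theorem mem_diffSet {x y : ι → Bool} {i : ι} : i ∈ diffSet x y ↔ x i ≠ y i := by
  simp [diffSet]

theorem diffSet_injective (x : ι → Bool) : Function.Injective (diffSet x) := by
  intro y z h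
  funext i
  have hi : x i ≠ y i ↔ x i ≠ z i := by rw [← mem_diffSet, ← mem_diffSet, h]
  revert hi; cases x i <;> cases y i <;> cases z i <;> decide

variable [DecidableEq ι]

theorem diffSet_eq_union_of_disjoint {x y z : ι → Bool}
    (h : Disjoint (diffSet x y) (diffSet y z)) : diffSet x z = diffSet x y ∪ diffSet y z := by
  ext i
  have hi : ¬(x i ≠ y i ∧ y i ≠ z i) := by
    rw [← mem_diffSet, ← mem_diffSet]; exact fun h' => disjoint_left.mp h h'.1 h'.2
  simp only [mem_diffSet, mem_union]
  revert hi; cases x i <;> cases y i <;> cases z i <;> decide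

theorem hammingDist_eq_add_of_disjoint {x y z : ι → Bool}
    (h : Disjoint (diffSet x y) (diffSet y z)) :
    hammingDist x z = hammingDist x y + hammingDist y z := by
  rw [← card_diffSet, diffSet_eq_union_of_disjoint h, card_union_of_disjoint h, card_diffSet,
    card_diffSet]

theorem card_powersetCard_filter_not_disjoint_le (E : Finset ι) (k : ℕ) :
    #{D ∈ powersetCard k (univ : Finset ι) | ¬Disjoint E D}
      ≤ #E * Fintype.card ι ^ (k - 1) := by
  have hcover : {D ∈ powersetCard k (univ : Finset ι) | ¬Disjoint E D} ⊆
      E.biUnion fun i => (powersetCard (k - 1) (univ : Finset ι)).image (insert i) := by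
    intro D hD
    simp only [mem_filter, mem_powersetCard_univ, not_disjoint_iff] at hD
    obtain ⟨hcard, i, hiE, hiD⟩ := hD
    refine mem_biUnion.2 ⟨i, hiE, mem_image.2 ⟨D.erase i, ?_, insert_erase hiD⟩⟩
    rw [mem_powersetCard_univ, card_erase_of_mem hiD, hcard]
  refine (card_le_card hcover).trans (card_biUnion_le_card_mul _ _ _ fun i _ => ?_)
  calc #((powersetCard (k - 1) (univ : Finset ι)).image (insert i))
      ≤ #(powersetCard (k - 1) (univ : Finset ι)) := card_image_le
    _ ≤ Fintype.card ι ^ (k - 1) := by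
      rw [card_powersetCard, card_univ]; exact Nat.choose_le_pow _ _

theorem card_filter_hammingDist_eq_le (x : ι → Bool) (k : ℕ) :
    #{z | hammingDist x z = k} ≤ Fintype.card ι ^ k :=
  calc #{z | hammingDist x z = k}
      ≤ #(powersetCard k (univ : Finset ι)) :=
        card_le_card_of_injOn (diffSet x)
          (fun z hz => mem_powersetCard_univ.2 (mem_filter.1 hz).2) (diffSet_injective x).injOn
    _ ≤ Fintype.card ι ^ k := by
      rw [card_powersetCard, card_univ]; exact Nat.choose_le_pow _ _

theorem card_filter_hammingDist_ne_add_le (x y : ι → Bool) (k : ℕ) :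
    #{z | hammingDist y z = k ∧ hammingDist x z ≠ hammingDist x y + k}
      ≤ hammingDist x y * Fintype.card ι ^ (k - 1) := by
  rw [← card_diffSet x y]
  refine le_trans (card_le_card_of_injOn (diffSet y) (fun z hz => ?_) (diffSet_injective y).injOn)
    (card_powersetCard_filter_not_disjoint_le _ k)
  simp only [coe_filter, mem_univ, true_and, Set.mem_ofPred_eq] at hz
  refine mem_filter.2 ⟨mem_powersetCard_univ.2 hz.1, fun hdisj => hz.2 ?_⟩
  rw [hammingDist_eq_add_of_disjoint hdisj, hz.1, card_diffSet]

end

section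
variable {n : ℕ}

theorem sum_hcount_sq (S : Finset (Fin n → Bool)) (l : ℕ) :
    ∑ v ∈ S, hcount S l v ^ 2 = ∑ x ∈ S, ∑ z ∈ S, hcount2 S l x z := by
  rw [← sum_product' (f := fun x z => hcount2 S l x z)]
  convert sum_card_bipartiteAbove_eq_sum_card_bipartiteBelow (s := S) (t := S ×ˢ S)
    (r := fun v p => hammingDist v p.1 = l ∧ hammingDist v p.2 = l) using 2 with v _ p _
  · rw [bipartiteAbove, filter_product (p := fun x => hammingDist v x = l)
      (q := fun z => hammingDist v z = l), card_product, sq, hcount]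
  · simp only [hcount2, bipartiteBelow, hammingDist_comm p.1, hammingDist_comm p.2]

theorem sum_hcount2_filter_ne_le (S : Finset (Fin n → Bool)) (l : ℕ) (x : Fin n → Bool) :
    ∑ z ∈ S with hammingDist x z ≠ 2 * l, hcount2 S l x z ≤ l * n ^ (2 * l - 1) := by
  set Γ := S.filter (hammingDist x · = l)
  set r : (Fin n → Bool) → (Fin n → Bool) → Prop := fun z y => hammingDist z y = l
  have hcount2_eq : ∀ z, hcount2 S l x z = #(Γ.bipartiteAbove r z) := by
    intro z; simp only [hcount2, bipartiteAbove, Γ, r, filter_filter]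
  have hfew : ∀ y ∈ Γ,
      #({z ∈ S | hammingDist x z ≠ 2 * l}.bipartiteBelow r y) ≤ l * n ^ (l - 1) := by
    intro y hy
    have hxy : hammingDist x y = l := (mem_filter.1 hy).2
    calc _ ≤ #{z | hammingDist y z = l ∧ hammingDist x z ≠ hammingDist x y + l} := by
          refine card_le_card fun z hz => ?_
          simp only [bipartiteBelow, r, mem_filter] at hz
          simp only [mem_filter, mem_univ, true_and]
          exact ⟨hammingDist_comm z y ▸ hz.2, by omega⟩
      _ ≤ l * n ^ (l - 1) := by
          simpa [hxy] using card_filter_hammingDist_ne_add_le x y l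
  have hΓ : #Γ ≤ n ^ l := by
    simpa using (card_le_card (filter_subset_filter _ (subset_univ S))).trans
      (card_filter_hammingDist_eq_le x l)
  simp only [hcount2_eq]
  rw [sum_card_bipartiteAbove_eq_sum_card_bipartiteBelow]
  calc _ ≤ #Γ * (l * n ^ (l - 1)) := sum_le_card_nsmul _ _ _ hfew
    _ ≤ n ^ l * (l * n ^ (l - 1)) := Nat.mul_le_mul_right _ hΓ
    _ = l * n ^ (2 * l - 1) := by
        rw [mul_left_comm, ← pow_add, show l + (l - 1) = 2 * l - 1 by omega]

end

theorem key_lemma_ii_general (l : ℕ) :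
    ∃ C : ℝ, ∀ n : ℕ, 1 ≤ n → ∀ S : Finset (Fin n → Bool),
      |(∑ v ∈ S, (hcount S l v : ℝ) ^ 2) -
          ∑ x ∈ S, ∑ z ∈ S.filter (fun z => hammingDist x z = 2 * l),
            (hcount2 S l x z : ℝ)| ≤
        C * (n : ℝ) ^ (2 * l - 1) * 2 ^ n := by
  refine ⟨l, fun n _ S => ?_⟩
  have hsplit : ∑ v ∈ S, hcount S l v ^ 2 =
      ∑ x ∈ S, ∑ z ∈ S with hammingDist x z = 2 * l, hcount2 S l x z +
        ∑ x ∈ S, ∑ z ∈ S with hammingDist x z ≠ 2 * l, hcount2 S l x z := by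
    rw [sum_hcount_sq, ← sum_add_distrib]
    exact sum_congr rfl fun x _ => (sum_filter_add_sum_filter_not _ _ _).symm
  have herr : ∑ x ∈ S, ∑ z ∈ S with hammingDist x z ≠ 2 * l, hcount2 S l x z
      ≤ 2 ^ n * (l * n ^ (2 * l - 1)) := by
    calc _ ≤ #S * (l * n ^ (2 * l - 1)) :=
          sum_le_card_nsmul _ _ _ fun x _ => sum_hcount2_filter_ne_le S l x
      _ ≤ 2 ^ n * (l * n ^ (2 * l - 1)) := by
          refine Nat.mul_le_mul_right _ ((card_le_univ S).trans ?_)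
          simp
  have hsplit_real := congrArg (Nat.cast (R := ℝ)) hsplit
  push_cast at hsplit_real
  rw [hsplit_real, add_sub_cancel_left, abs_of_nonneg (by positivity)]
  calc _ ≤ ((2 ^ n * (l * n ^ (2 * l - 1)) : ℕ) : ℝ) := by exact_mod_cast herr
    _ = _ := by push_cast; ring

/-- Key lemma (ii): Σ_{v ∈ S} h_l(v)² = Σ_{x ∈ S} Σ_{z ∈ S ∩ Γ_{2l}(x)} h_l(x,z)
+ O(n^{2l−1} 2^n). -/
theorem key_lemma_ii (l : ℕ) (hl : 1 ≤ l) :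
    ∃ C : ℝ, ∀ n : ℕ, 1 ≤ n → ∀ S : Finset (Fin n → Bool),
      |(∑ v ∈ S, (hcount S l v : ℝ) ^ 2) -
          ∑ x ∈ S, ∑ z ∈ S.filter (fun z => hammingDist x z = 2 * l),
            (hcount2 S l x z : ℝ)| ≤
        C * (n : ℝ) ^ (2 * l - 1) * 2 ^ n :=
  key_lemma_ii_general l
end
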